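/- Two p-strings x and y parameterized-match (there is a bijection π on Σp such that applying π to each p-symbol occurrence of x yields y, with static symbols fixed) if and only if their p-encodings are equal. -/

import Mathlib

/-- Symbols of a parameterized string: static symbols `s a` (from Σs) and
parameter symbols `p a` (from Σp). -/
inductive PSym where
  | s : ℕ → PSym
  | p : ℕ → PSym
deriving DecidableEq

/-- Symbols of a p-encoded string: static symbols, finite distances, and ∞. -/
inductive Enc where
  | s : ℕ → Enc
  | fin : ℕ → Enc
  | inf : Enc
deriving DecidableEq

/-- Order embedding: static symbols < natural numbers < ∞. -/
def Enc.toPair : Enc → ℕ ×ₗ ℕ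
  | .s a => toLex (0, a)
  | .fin d => toLex (1, d)
  | .inf => toLex (2, 0)

instance : LinearOrder Enc :=
  LinearOrder.lift' Enc.toPair (by
    rintro (a | a | _) (b | b | _) h <;>
      simp_all [Enc.toPair, toLex_inj, Prod.ext_iff])

/-- Largest position `j < i` (0-based) carrying the same symbol as position `i`. -/
def prevOcc (w : List PSym) (i : ℕ) : Option ℕ :=
  ((List.range i).filter (fun j => w[j]? = w[i]?)).max?

/-- The p-encoding of position `i` (0-based) of `w`. -/
def pencSym (w : List PSym) (i : ℕ) : Enc :=
  match w[i]? with
  | some (PSym.s a) => Enc.s a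
  | some (PSym.p _) =>
    match prevOcc w i with
    | some j => Enc.fin (i - j)
    | none => Enc.inf
  | none => Enc.inf

/-- The p-encoding ⟨w⟩ of a p-string `w`. -/
def penc (w : List PSym) : List Enc :=
  (List.range w.length).map (pencSym w)

/-- Lexicographic (strict) order on p-encoded strings. -/
def lexLt (x y : List Enc) : Prop := List.Lex (· < ·) x y

def lexLe (x y : List Enc) : Prop := lexLt x y ∨ x = y

/-- Length of the longest common prefix. -/
def lcp {α : Type*} [DecidableEq α] : List α → List α → ℕ
  | a :: x, b :: y => if a = b then lcp x y + 1 else 0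
  | _, _ => 0

/-- Number of ∞'s in the longest common prefix of two p-encoded strings. -/
def lcpInf (x y : List Enc) : ℕ := (x.take (lcp x y)).count Enc.inf

/-- Number of distinct p-symbols occurring in `w` (denoted |w|_p). -/
def distinctP (w : List PSym) : ℕ :=
  (w.filterMap (fun s => match s with | PSym.p a => some a | PSym.s _ => none)).dedup.length

/-- For `w` starting with a p-symbol: the rank of `w[1]` among the distinct
p-symbols of `w[1..h+1]`, where `h+1 = min{|w|, second occurrence of w[1] in w}`. -/
def fceRank (w : List PSym) : ℕ :=
  match w with
  | [] => 0
  | c :: rest => distinctP ((c :: rest).take (min (c :: rest).length (2 + rest.idxOf c)))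

/-- The function fce from the paper; `fce ε = $` is modelled as `Enc.s 0`. -/
def fce (w : List PSym) : Enc :=
  match w with
  | [] => Enc.s 0
  | PSym.s a :: _ => Enc.s a
  | w => Enc.fin (fceRank w)


/-- Renaming of p-symbols by a bijection `π` on Σp, fixing static symbols. -/
def applyPerm (π : Equiv.Perm ℕ) : PSym → PSym
  | PSym.s a => PSym.s a
  | PSym.p a => PSym.p (π a)

/-! The p-encoding records only the static symbols and, for each p-symbol, the distance back to
its previous occurrence, so it is invariant under renaming p-symbols. Conversely, induct on
appending one symbol to both strings: the new encoding entry is either a static symbol (equal on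
both sides), a distance `d` (so both new symbols repeat the symbols `d` positions back, which the
renaming already matches), or `∞` (both new symbols are fresh, and composing the renaming with a
transposition sends one to the other without disturbing the symbols already present). -/

lemma applyPerm_injective (π : Equiv.Perm ℕ) : Function.Injective (applyPerm π) := by
  rintro (a | a) (b | b) h <;> simp_all [applyPerm]

lemma prevOcc_map_of_injective {f : PSym → PSym} (hf : Function.Injective f)
    (w : List PSym) (i : ℕ) : prevOcc (w.map f) i = prevOcc w i := by
  unfold prevOcc
  congr 1
  refine List.filter_congr fun j _ => ?_
  simp only [List.getElem?_map, (Option.map_injective hf).eq_iff]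

lemma pencSym_map_applyPerm (π : Equiv.Perm ℕ) (w : List PSym) (i : ℕ) :
    pencSym (w.map (applyPerm π)) i = pencSym w i := by
  unfold pencSym
  rw [List.getElem?_map, prevOcc_map_of_injective (applyPerm_injective π)]
  rcases w[i]? with _ | _ | _ <;> rfl

lemma penc_map_applyPerm (π : Equiv.Perm ℕ) (w : List PSym) :
    penc (w.map (applyPerm π)) = penc w := by
  simp only [penc, List.length_map, funext (pencSym_map_applyPerm π w)]

lemma length_penc (w : List PSym) : (penc w).length = w.length := by
  simp [penc]

lemma prevOcc_append_of_lt {w : List PSym} {i : ℕ} (hi : i < w.length) (v : List PSym) :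
    prevOcc (w ++ v) i = prevOcc w i := by
  unfold prevOcc
  congr 1
  refine List.filter_congr fun j hj => ?_
  rw [List.getElem?_append_left hi,
    List.getElem?_append_left ((List.mem_range.mp hj).trans hi)]

lemma pencSym_append_of_lt {w : List PSym} {i : ℕ} (hi : i < w.length) (v : List PSym) :
    pencSym (w ++ v) i = pencSym w i := by
  unfold pencSym
  rw [List.getElem?_append_left hi, prevOcc_append_of_lt hi]

lemma penc_append_singleton (w : List PSym) (c : PSym) :
    penc (w ++ [c]) = penc w ++ [pencSym (w ++ [c]) w.length] := by
  unfold penc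
  rw [List.length_append, List.length_singleton, List.range_succ, List.map_append,
    List.map_singleton]
  congr 1
  exact List.map_congr_left fun i hi => pencSym_append_of_lt (List.mem_range.mp hi) _

lemma getElem?_eq_of_prevOcc_eq_some {w : List PSym} {i j : ℕ} (h : prevOcc w i = some j) :
    j < i ∧ w[j]? = w[i]? := by
  obtain ⟨hj, -⟩ := List.max?_eq_some_iff.mp h
  rw [List.mem_filter, List.mem_range, decide_eq_true_iff] at hj
  exact hj

lemma getElem?_ne_of_prevOcc_eq_none {w : List PSym} {i : ℕ} (h : prevOcc w i = none) :
    ∀ j < i, w[j]? ≠ w[i]? := by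
  intro j hj hji
  rw [prevOcc, List.max?_eq_none_iff, List.filter_eq_nil_iff] at h
  simpa [hji] using h j (List.mem_range.mpr hj)

lemma getElem?_of_pencSym_eq_s {w : List PSym} {i a : ℕ} (h : pencSym w i = Enc.s a) :
    w[i]? = some (PSym.s a) := by
  unfold pencSym at h
  rcases hw : w[i]? with _ | _ | _ <;> rw [hw] at h
  · cases h
  · cases h; rfl
  · rcases hj : prevOcc w i with _ | j <;> simp [hj] at h

lemma getElem?_sub_of_pencSym_eq_fin {w : List PSym} {i d : ℕ} (h : pencSym w i = Enc.fin d) :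
    0 < d ∧ d ≤ i ∧ w[i - d]? = w[i]? := by
  unfold pencSym at h
  rcases hw : w[i]? with _ | _ | _ <;> rw [hw] at h
  · cases h
  · cases h
  · rcases hj : prevOcc w i with _ | j <;> rw [hj] at h
    · cases h
    · cases h
      obtain ⟨hji, hwj⟩ := getElem?_eq_of_prevOcc_eq_some hj
      refine ⟨by omega, by omega, ?_⟩
      rw [Nat.sub_sub_self hji.le, hwj, hw]

lemma fresh_of_pencSym_append_singleton_eq_inf {w : List PSym} {c : PSym}
    (h : pencSym (w ++ [c]) w.length = Enc.inf) : (∃ e, c = PSym.p e) ∧ c ∉ w := by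
  have hc : (w ++ [c])[w.length]? = some c := by simp
  unfold pencSym at h
  rw [hc] at h
  rcases c with a | e
  · cases h
  refine ⟨⟨e, rfl⟩, fun hmem => ?_⟩
  have hnone : prevOcc (w ++ [PSym.p e]) w.length = none := by
    rcases hj : prevOcc (w ++ [PSym.p e]) w.length with _ | j
    · rfl
    · simp [hj] at h
  obtain ⟨j, hj, hwj⟩ := List.getElem_of_mem hmem
  refine getElem?_ne_of_prevOcc_eq_none hnone j hj ?_
  rw [List.getElem?_append_left hj, hc, List.getElem?_eq_getElem hj, hwj]

lemma exists_perm_map_append_fresh {x : List PSym} {π : Equiv.Perm ℕ} {c e : ℕ}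
    (hc : PSym.p c ∉ x) (he : PSym.p e ∉ x.map (applyPerm π)) :
    ∃ π' : Equiv.Perm ℕ,
      (x ++ [PSym.p c]).map (applyPerm π') = x.map (applyPerm π) ++ [PSym.p e] := by
  refine ⟨π.trans (Equiv.swap (π c) e), ?_⟩
  rw [List.map_append, List.map_singleton]
  congr 1
  · refine List.map_congr_left fun s hs => ?_
    rcases s with a | a
    · rfl
    · have hac : a ≠ c := by rintro rfl; exact hc hs
      have hae : π a ≠ e := by rintro rfl; exact he (List.mem_map_of_mem hs)
      simp [applyPerm, Equiv.swap_apply_of_ne_of_ne (π.injective.ne hac) hae]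
  · simp [applyPerm]

lemma exists_perm_map_append_singleton {x : List PSym} {π : Equiv.Perm ℕ} {a b : PSym}
    (h : pencSym (x ++ [a]) x.length = pencSym (x.map (applyPerm π) ++ [b]) x.length) :
    ∃ π' : Equiv.Perm ℕ, (x ++ [a]).map (applyPerm π') = x.map (applyPerm π) ++ [b] := by
  set y := x.map (applyPerm π) with hy
  have hlen : y.length = x.length := List.length_map _
  have hxa : (x ++ [a])[x.length]? = some a := by simp
  have hyb : (y ++ [b])[x.length]? = some b := by simp [hlen]
  cases hx : pencSym (x ++ [a]) x.length with
  | s s0 =>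
    have ha := getElem?_of_pencSym_eq_s hx
    have hb := getElem?_of_pencSym_eq_s (h ▸ hx)
    rw [hxa, Option.some_inj] at ha
    rw [hyb, Option.some_inj] at hb
    exact ⟨π, by rw [List.map_append, List.map_singleton, ha, hb]; rfl⟩
  | fin d =>
    obtain ⟨hd, hdn, hxd⟩ := getElem?_sub_of_pencSym_eq_fin hx
    obtain ⟨-, -, hyd⟩ := getElem?_sub_of_pencSym_eq_fin (h ▸ hx)
    rw [List.getElem?_append_left (by omega), hxa] at hxd
    rw [List.getElem?_append_left (by omega), hyb, hy, List.getElem?_map, hxd,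
      Option.map_some, Option.some_inj] at hyd
    exact ⟨π, by rw [List.map_append, List.map_singleton, hyd]⟩
  | inf =>
    obtain ⟨⟨c, rfl⟩, hc⟩ := fresh_of_pencSym_append_singleton_eq_inf hx
    obtain ⟨⟨e, rfl⟩, he⟩ := fresh_of_pencSym_append_singleton_eq_inf (hlen ▸ h ▸ hx)
    exact exists_perm_map_append_fresh hc he

theorem exists_perm_map_eq_of_penc_eq {x y : List PSym} (h : penc x = penc y) :
    ∃ π : Equiv.Perm ℕ, x.map (applyPerm π) = y := by
  induction x using List.reverseRecOn generalizing y with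
  | nil =>
    have hy : y = [] := by
      simpa [length_penc, eq_comm] using congrArg List.length h
    exact ⟨1, by simp [hy]⟩
  | append_singleton x a ih =>
    obtain ⟨y, b, rfl⟩ : ∃ y' b, y = y' ++ [b] := by
      refine (List.eq_nil_or_concat' y).resolve_left fun hy => ?_
      simpa [hy, length_penc] using congrArg List.length h
    rw [penc_append_singleton, penc_append_singleton] at h
    obtain ⟨hpre, hlast⟩ := List.append_inj' h rfl
    obtain ⟨π, rfl⟩ := ih hpre
    exact exists_perm_map_append_singleton (by simpa using hlast)

/-- Two p-strings parameterized-match iff their p-encodings are equal. -/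
theorem stmt2 (x y : List PSym) :
    (∃ π : Equiv.Perm ℕ, x.map (applyPerm π) = y) ↔ penc x = penc y := by
  constructor
  · rintro ⟨π, rfl⟩
    exact (penc_map_applyPerm π x).symm
  · exact exists_perm_map_eq_of_penc_eq
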